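/- Suppose a sequence Z(t) ≥ 0 satisfies Z(t+1) ≥ Z(t) − δ(t) or Z(t+1) ≥ 0, i.e., Z(t+1) ≥ max(Z(t) − δ(t), 0) in the weaker form that either Z(t+1) ≥ Z(t) − δ(t) or Z(t+1) ≥ 0 holds, with |δ(t)| ≤ δ_max. Let ε > 0, w = (ε/δ_max²)e^{−ε/δ_max}, and Q > 0. Then e^{w(Q−Z(t+1))} − e^{w(Q−Z(t))} ≤ e^{wQ} + w·e^{w(Q−Z(t))}·(δ(t) + ε/2). -/

import Mathlib

/-!
Reading the exponential series term by term gives `e^x ≤ 1 + x + (x²/2) e^{|x|}`, hence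
`e^{wδ} ≤ 1 + wδ + wε/2` as soon as `w δ_max² e^{w δ_max} ≤ ε`; for the chosen `w` this holds
because `w δ_max ≤ ε/δ_max`, so the factor `e^{w δ_max}` is cancelled by the `e^{-ε/δ_max}` in `w`.
If `Z(t+1) ≥ Z(t) - δ(t)`, then `e^{w(Q - Z(t+1))} ≤ e^{w(Q - Z(t))} e^{wδ(t)}` and the bound follows.
If only `Z(t+1) ≥ 0`, the first term is at most `e^{wQ}`, and `-e^{w(Q - Z(t))}` is absorbed because
`1 + w(δ(t) + ε/2) ≥ e^{wδ(t)} > 0`.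
-/

open Real Nat

theorem Real.exp_le_one_add_add_sq_div_two_mul_exp_abs (x : ℝ) :
    exp x ≤ 1 + x + x ^ 2 / 2 * exp |x| := by
  have hasSum_exp (y : ℝ) : HasSum (fun n ↦ y ^ n / n !) (exp y) :=
    exp_eq_exp_ℝ ▸ NormedSpace.expSeries_div_hasSum_exp y
  have htail : HasSum (fun n ↦ x ^ (n + 2) / (n + 2)!) (exp x - (1 + x)) := by
    simpa [Finset.sum_range_succ] using (hasSum_nat_add_iff' 2).2 (hasSum_exp x)
  have hmajorant := (hasSum_exp |x|).mul_left (x ^ 2 / 2)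
  refine sub_le_iff_le_add'.1 (hasSum_le (fun n ↦ ?_) htail hmajorant)
  have hfact : (2 * n ! : ℝ) ≤ (n + 2)! := by
    exact_mod_cast Nat.le_of_dvd (factorial_pos _)
      (mul_comm 2 n ! ▸ factorial_mul_factorial_dvd_factorial_add n 2)
  calc x ^ (n + 2) / (n + 2)! ≤ |x| ^ (n + 2) / (2 * n !) := by
        gcongr ?_ / ?_
        exact (le_abs_self _).trans_eq (abs_pow x _)
    _ = x ^ 2 / 2 * (|x| ^ n / n !) := by
        rw [pow_add, mul_comm, ← sq_abs x]
        field_simp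

theorem Real.exp_mul_le_one_add_mul_add_of_abs_le {w d D ε : ℝ} (hw : 0 ≤ w) (hd : |d| ≤ D)
    (hε : w * D ^ 2 * exp (w * D) ≤ ε) : exp (w * d) ≤ 1 + w * d + w * ε / 2 := by
  have hsq : d ^ 2 ≤ D ^ 2 := sq_le_sq' (abs_le.1 hd).1 (abs_le.1 hd).2
  have habs : |w * d| ≤ w * D := by
    rw [abs_mul, abs_of_nonneg hw]
    gcongr
  calc exp (w * d) ≤ 1 + w * d + (w * d) ^ 2 / 2 * exp |w * d| :=
        exp_le_one_add_add_sq_div_two_mul_exp_abs _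
    _ = 1 + w * d + w * (w * d ^ 2 * exp |w * d|) / 2 := by ring
    _ ≤ 1 + w * d + w * (w * D ^ 2 * exp (w * D)) / 2 := by gcongr
    _ ≤ 1 + w * d + w * ε / 2 := by gcongr

noncomputable def driftWeight (ε D : ℝ) : ℝ := ε / D ^ 2 * exp (-ε / D)

theorem driftWeight_mul_sq_mul_exp_le {ε D : ℝ} (hε : 0 ≤ ε) (hD : 0 < D) :
    driftWeight ε D * D ^ 2 * exp (driftWeight ε D * D) ≤ ε := by
  have hsq : driftWeight ε D * D ^ 2 = ε * exp (-ε / D) := by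
    unfold driftWeight
    field_simp
  have hlin : driftWeight ε D * D ≤ ε / D := by
    have hmul : driftWeight ε D * D = ε / D * exp (-(ε / D)) := by
      unfold driftWeight
      field_simp
    rw [hmul]
    exact mul_le_of_le_one_right (by positivity) (exp_le_one_iff.2 (neg_nonpos.2 (by positivity)))
  calc driftWeight ε D * D ^ 2 * exp (driftWeight ε D * D)
      ≤ ε * exp (-ε / D) * exp (ε / D) := by
        rw [hsq]
        gcongr
    _ = ε := by rw [mul_assoc, ← exp_add, neg_div, neg_add_cancel, exp_zero, mul_one]

theorem exp_sub_exp_le_of_step {w Q z z' d ε : ℝ} (hw : 0 ≤ w) (hstep : z - d ≤ z' ∨ 0 ≤ z')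
    (hexp : exp (w * d) ≤ 1 + w * d + w * ε / 2) :
    exp (w * (Q - z')) - exp (w * (Q - z)) ≤
      exp (w * Q) + w * exp (w * (Q - z)) * (d + ε / 2) := by
  have hV : 0 < exp (w * (Q - z)) := exp_pos _
  rcases hstep with hdown | hnonneg
  · have hnext : exp (w * (Q - z')) ≤ exp (w * (Q - z)) * exp (w * d) := by
      rw [← exp_add]
      gcongr
      nlinarith
    nlinarith [exp_pos (w * Q)]
  · have hnext : exp (w * (Q - z')) ≤ exp (w * Q) := by
      gcongr
      linarith
    nlinarith [exp_pos (w * d)]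

theorem exp_drift_lower_general (Z δ : ℕ → ℝ) (δ_max ε Q : ℝ)
    (hδmax : 0 < δ_max) (hε : 0 < ε)
    (hδ : ∀ t, |δ t| ≤ δ_max)
    (hdyn : ∀ t, Z t - δ t ≤ Z (t + 1) ∨ 0 ≤ Z (t + 1)) :
    ∀ t,
      let w := (ε / δ_max ^ 2) * Real.exp (-ε / δ_max)
      Real.exp (w * (Q - Z (t + 1))) - Real.exp (w * (Q - Z t)) ≤
        Real.exp (w * Q) + w * Real.exp (w * (Q - Z t)) * (δ t + ε / 2) := by
  intro t w
  have hw : 0 ≤ w := by positivity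
  exact exp_sub_exp_le_of_step hw (hdyn t)
    (exp_mul_le_one_add_mul_add_of_abs_le hw (hδ t) (driftWeight_mul_sq_mul_exp_le hε.le hδmax))

theorem exp_drift_lower (Z δ : ℕ → ℝ) (δ_max ε Q : ℝ)
    (hδmax : 0 < δ_max) (hε : 0 < ε) (hQ : 0 < Q)
    (hZ : ∀ t, 0 ≤ Z t)
    (hδ : ∀ t, |δ t| ≤ δ_max)
    (hdyn : ∀ t, Z t - δ t ≤ Z (t + 1) ∨ 0 ≤ Z (t + 1)) :
    ∀ t,
      let w := (ε / δ_max ^ 2) * Real.exp (-ε / δ_max)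
      Real.exp (w * (Q - Z (t + 1))) - Real.exp (w * (Q - Z t)) ≤
        Real.exp (w * Q) + w * Real.exp (w * (Q - Z t)) * (δ t + ε / 2) :=
  exp_drift_lower_general Z δ δ_max ε Q hδmax hε hδ hdyn
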